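/- Assume p > 1 and l ≥ 2. Assume that the 0/1 matrix P is a parity check matrix of a binary code of distance at least l+1, i.e., every nonzero v ∈ F₂^h with (P mod 2)·v = 0 has Hamming weight at least l+1. Assume also that ‖B·x − w·y‖_p^p > l for every x ∈ ℤ^q and every nonzero integer w. Then every vector u in the lattice L(B_int) with ‖u‖_p^p ≤ l has all of its coordinates even. -/

import Mathlib

/-- The BCH gadget lattice basis `B_BCH = [[Id_h, 0], [l·P, 2l·Id_g]]`. -/
def BBCH (g h l : ℕ) (P : Matrix (Fin g) (Fin h) ℤ) :
    Matrix (Fin h ⊕ Fin g) (Fin h ⊕ Fin g) ℤ :=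
  Matrix.fromBlocks 1 0 ((l : ℤ) • P) ((2 * l : ℤ) • 1)

/-- The intermediate lattice basis `B_int = [[2B, 0, 2y], [0, B_BCH, s]]`. -/
def Bint (n q g h l : ℕ) (B : Matrix (Fin n) (Fin q) ℤ) (y : Fin n → ℤ)
    (P : Matrix (Fin g) (Fin h) ℤ) (s : Fin h ⊕ Fin g → ℤ) :
    Matrix (Fin n ⊕ (Fin h ⊕ Fin g)) ((Fin q ⊕ (Fin h ⊕ Fin g)) ⊕ Unit) ℤ :=
  Matrix.of fun i j =>
    match i, j with
    | Sum.inl i, Sum.inl (Sum.inl j) => 2 * B i j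
    | Sum.inl _, Sum.inl (Sum.inr _) => 0
    | Sum.inl i, Sum.inr _ => 2 * y i
    | Sum.inr _, Sum.inl (Sum.inl _) => 0
    | Sum.inr i, Sum.inl (Sum.inr j) => BBCH g h l P i j
    | Sum.inr i, Sum.inr _ => s i

/-!
Write `u = B_int · (x, a, z, w)` with `x ∈ ℤ^q`, `a ∈ ℤ^h`, `z ∈ ℤ^g`, `w ∈ ℤ`. The top block of `u`
is `2 (B x + w y)`, so if `w ≠ 0` the hypothesis on `B` and `y` already forces `‖u‖_p^p > l`;
hence `w = 0`, the middle block is `a` and the bottom block is `l (P a + 2 z)`. If `a` had an odd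
entry, then either `a mod 2` is a nonzero codeword, so `a` has at least `l + 1` nonzero entries,
or some entry of `P a` is odd, so `|l (P a + 2 z)_i|^p ≥ l^p > l`. Either way `‖u‖_p^p > l`.
Thus `a` is even, and then every block of `u` is even.
-/

open Matrix

lemma sum_abs_rpow_le_sum_abs_rpow {ι : Type*} [Fintype ι] {p : ℝ} (hp : 0 ≤ p) {u v : ι → ℝ}
    (h : ∀ i, |u i| ≤ |v i|) : ∑ i, |u i| ^ p ≤ ∑ i, |v i| ^ p :=
  Finset.sum_le_sum fun i _ => Real.rpow_le_rpow (abs_nonneg _) (h i) hp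

lemma hammingNorm_le_sum_abs_rpow {ι : Type*} [Fintype ι] {p : ℝ} (hp : 0 ≤ p) (a : ι → ℤ) :
    (hammingNorm a : ℝ) ≤ ∑ i, |(a i : ℝ)| ^ p := by
  calc (hammingNorm a : ℝ) = ∑ i ∈ Finset.univ.filter (a · ≠ 0), (1 : ℝ) := by
        simp [hammingNorm]
    _ ≤ ∑ i ∈ Finset.univ.filter (a · ≠ 0), |(a i : ℝ)| ^ p := by
        refine Finset.sum_le_sum fun i hi => Real.one_le_rpow ?_ hp
        exact_mod_cast Int.one_le_abs (Finset.mem_filter.mp hi).2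
    _ ≤ ∑ i, |(a i : ℝ)| ^ p :=
        Finset.sum_le_sum_of_subset_of_nonneg (Finset.filter_subset _ _) fun _ _ _ => by positivity

lemma lt_abs_mul_rpow {l p : ℝ} (hl : 1 < l) (hp : 1 < p) {m : ℤ} (hm : m ≠ 0) :
    l < |l * m| ^ p := by
  have hlm : l ≤ |l * m| := by
    rw [abs_mul, abs_of_pos (by linarith)]
    exact le_mul_of_one_le_right (by linarith) (by exact_mod_cast Int.one_le_abs hm)
  calc l < l ^ p := Real.self_lt_rpow_of_one_lt hl hp
    _ ≤ |l * m| ^ p := Real.rpow_le_rpow (by linarith) hlm (by linarith)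

lemma even_of_sum_abs_rpow_le {ι κ : Type*} [Fintype ι] [Fintype κ] {l : ℕ} (hl : 2 ≤ l)
    {p : ℝ} (hp : 1 < p) {P : Matrix κ ι ℤ}
    (hcode : ∀ v : ι → ZMod 2, v ≠ 0 →
      (P.map (Int.cast : ℤ → ZMod 2)) *ᵥ v = 0 → l + 1 ≤ hammingNorm v)
    (a : ι → ℤ) (z : κ → ℤ)
    (hsum : ∑ j, |(a j : ℝ)| ^ p + ∑ i, |(((l : ℤ) * ((P *ᵥ a) i + 2 * z i) : ℤ) : ℝ)| ^ p ≤ l) :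
    ∀ j, Even (a j) := by
  set v : ι → ZMod 2 := Int.castRingHom (ZMod 2) ∘ a
  suffices v = 0 from fun j => ZMod.intCast_eq_zero_iff_even.mp (congr_fun this j)
  by_contra hv
  have ha_nonneg : 0 ≤ ∑ j, |(a j : ℝ)| ^ p := Finset.sum_nonneg fun _ _ => by positivity
  have hz_nonneg : 0 ≤ ∑ i, |(((l : ℤ) * ((P *ᵥ a) i + 2 * z i) : ℤ) : ℝ)| ^ p :=
    Finset.sum_nonneg fun _ _ => by positivity
  by_cases hPv : P.map (Int.cast : ℤ → ZMod 2) *ᵥ v = 0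
  · have hweight : ((l + 1 : ℕ) : ℝ) ≤ ∑ j, |(a j : ℝ)| ^ p :=
      calc ((l + 1 : ℕ) : ℝ) ≤ hammingNorm v := by exact_mod_cast hcode v hv hPv
        _ ≤ hammingNorm a := by
            exact_mod_cast hammingNorm_comp_le_hammingNorm (fun _ => Int.castRingHom (ZMod 2))
              fun _ => map_zero _
        _ ≤ _ := hammingNorm_le_sum_abs_rpow (by linarith) a
    push_cast at hweight
    linarith
  · obtain ⟨i, hi⟩ := Function.ne_iff.mp hPv
    have hne : (P *ᵥ a) i + 2 * z i ≠ 0 := by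
      intro h0
      apply hi
      refine (RingHom.map_mulVec (Int.castRingHom (ZMod 2)) P a i).symm.trans ?_
      exact ZMod.intCast_eq_zero_iff_even.mpr ⟨-z i, by linarith⟩
    have hbig := lt_abs_mul_rpow (l := l) (by exact_mod_cast hl) hp hne
    have hle : |(((l : ℤ) * ((P *ᵥ a) i + 2 * z i) : ℤ) : ℝ)| ^ p
        ≤ ∑ i, |(((l : ℤ) * ((P *ᵥ a) i + 2 * z i) : ℤ) : ℝ)| ^ p :=
      Finset.single_le_sum (f := fun i => |(((l : ℤ) * ((P *ᵥ a) i + 2 * z i) : ℤ) : ℝ)| ^ p)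
        (fun _ _ => by positivity) (Finset.mem_univ i)
    push_cast at hle hsum hbig
    linarith

section Bint

variable {n q g h l : ℕ} (B : Matrix (Fin n) (Fin q) ℤ) (y : Fin n → ℤ)
  (P : Matrix (Fin g) (Fin h) ℤ) (s : Fin h ⊕ Fin g → ℤ)
  (xx : (Fin q ⊕ (Fin h ⊕ Fin g)) ⊕ Unit → ℤ)

lemma Bint_mulVec_inl (i : Fin n) :
    (Bint n q g h l B y P s *ᵥ xx) (Sum.inl i)
      = 2 * ((B *ᵥ fun j => xx (Sum.inl (Sum.inl j))) i + xx (Sum.inr ()) * y i) := by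
  simp only [Bint, mulVec, dotProduct, Fintype.sum_sum_type, of_apply, Fintype.sum_unique,
    zero_mul, Finset.sum_const_zero, add_zero, mul_add, Finset.mul_sum, mul_assoc]
  ring

lemma Bint_mulVec_inr_inl (j : Fin h) :
    (Bint n q g h l B y P s *ᵥ xx) (Sum.inr (Sum.inl j))
      = xx (Sum.inl (Sum.inr (Sum.inl j))) + s (Sum.inl j) * xx (Sum.inr ()) := by
  simp [Bint, BBCH, mulVec, dotProduct, Fintype.sum_sum_type, one_apply]

lemma Bint_mulVec_inr_inr (i : Fin g) :
    (Bint n q g h l B y P s *ᵥ xx) (Sum.inr (Sum.inr i))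
      = l * ((P *ᵥ fun j => xx (Sum.inl (Sum.inr (Sum.inl j)))) i
          + 2 * xx (Sum.inl (Sum.inr (Sum.inr i)))) + s (Sum.inr i) * xx (Sum.inr ()) := by
  simp only [Bint, BBCH, mulVec, dotProduct, Fintype.sum_sum_type, of_apply, Fintype.sum_unique,
    zero_mul, Finset.sum_const_zero, zero_add, fromBlocks_apply₂₁, fromBlocks_apply₂₂,
    Matrix.smul_apply, one_apply, smul_eq_mul, mul_ite, mul_one, mul_zero, ite_mul,
    Finset.sum_ite_eq, Finset.mem_univ, if_true, mul_add, Finset.mul_sum, mul_assoc]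
  ring

variable {B y P s xx}

lemma Bint_last_coeff_eq_zero_of_short {p : ℝ} (hp : 0 ≤ p)
    (hNO : ∀ (x : Fin q → ℤ) (w : ℤ), w ≠ 0 →
      (l : ℝ) < ∑ i, |((B.mulVec x - w • y) i : ℝ)| ^ p)
    (hsum : ∑ i, |((Bint n q g h l B y P s *ᵥ xx) i : ℝ)| ^ p ≤ l) :
    xx (Sum.inr ()) = 0 := by
  by_contra hw
  have hlong := hNO (fun j => xx (Sum.inl (Sum.inl j))) (-xx (Sum.inr ())) (neg_ne_zero.mpr hw)
  have htop :
      ∑ i, |((B *ᵥ (fun j => xx (Sum.inl (Sum.inl j))) - -xx (Sum.inr ()) • y) i : ℝ)| ^ p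
        ≤ ∑ i, |((Bint n q g h l B y P s *ᵥ xx) (Sum.inl i) : ℝ)| ^ p := by
    refine sum_abs_rpow_le_sum_abs_rpow hp fun i => ?_
    rw [Bint_mulVec_inl]
    simp only [Pi.sub_apply, Pi.smul_apply, smul_eq_mul, neg_mul, sub_neg_eq_add, Int.cast_mul,
      Int.cast_add, Int.cast_ofNat, abs_mul, abs_two]
    exact le_mul_of_one_le_left (abs_nonneg _) one_le_two
  have hrest : 0 ≤ ∑ i, |((Bint n q g h l B y P s *ᵥ xx) (Sum.inr i) : ℝ)| ^ p :=
    Finset.sum_nonneg fun _ _ => by positivity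
  rw [Fintype.sum_sum_type] at hsum
  linarith

end Bint

theorem stmt14 (n q g h l : ℕ)
    (hl : 2 ≤ l) (p : ℝ) (hp : 1 < p)
    (B : Matrix (Fin n) (Fin q) ℤ) (y : Fin n → ℤ)
    (P : Matrix (Fin g) (Fin h) ℤ)
    (s : Fin h ⊕ Fin g → ℤ)
    (hcode : ∀ v : Fin h → ZMod 2, v ≠ 0 →
      (P.map (Int.cast : ℤ → ZMod 2)).mulVec v = 0 → l + 1 ≤ hammingNorm v)
    (hNO : ∀ (x : Fin q → ℤ) (w : ℤ), w ≠ 0 →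
      (l : ℝ) < ∑ i, |((B.mulVec x - w • y) i : ℝ)| ^ p) :
    ∀ xx : ((Fin q ⊕ (Fin h ⊕ Fin g)) ⊕ Unit) → ℤ,
      (∑ i, |((Bint n q g h l B y P s).mulVec xx i : ℝ)| ^ p) ≤ (l : ℝ) →
      ∀ i, Even ((Bint n q g h l B y P s).mulVec xx i) := by
  intro xx hsum
  have hw := Bint_last_coeff_eq_zero_of_short (by linarith) hNO hsum
  have ha : ∀ j, Even (xx (Sum.inl (Sum.inr (Sum.inl j)))) := by
    refine even_of_sum_abs_rpow_le hl hp hcode _ (fun i => xx (Sum.inl (Sum.inr (Sum.inr i)))) ?_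
    refine le_trans ?_ hsum
    simp only [Fintype.sum_sum_type, Bint_mulVec_inr_inl, Bint_mulVec_inr_inr, hw, mul_zero,
      add_zero]
    exact le_add_of_nonneg_left (Finset.sum_nonneg fun _ _ => by positivity)
  rintro (i | j | i)
  · rw [Bint_mulVec_inl]
    exact even_two_mul _
  · rw [Bint_mulVec_inr_inl, hw, mul_zero, add_zero]
    exact ha j
  · rw [Bint_mulVec_inr_inr, hw, mul_zero, add_zero, even_iff_two_dvd, mulVec, dotProduct]
    refine dvd_mul_of_dvd_right (dvd_add (Finset.dvd_sum fun j _ => ?_) (dvd_mul_right _ _)) _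
    exact dvd_mul_of_dvd_right (even_iff_two_dvd.mp (ha j)) _
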